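/- Let f : F → G be a homomorphism of formal group laws over a commutative ring R. If the linear coefficient of f is zero, then the formal derivative of f is the zero power series; equivalently, n·(coefficient of T^n in f) = 0 for all n ≥ 1. -/

import Mathlib

namespace FGL

variable {R : Type*} [CommRing R]

/-- `subst2 F a b` is the substitution `F(a,b)` of the power series `a`, `b`
(with zero constant term) into the two-variable power series `F`. -/
noncomputable def subst2 {σ : Type*} (F : MvPowerSeries (Fin 2) R)
    (a b : MvPowerSeries σ R) : MvPowerSeries σ R :=
  fun d =>
    ∑ ij ∈ Finset.range ((d.sum fun _ k => k) + 1) ×ˢ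
        Finset.range ((d.sum fun _ k => k) + 1),
      MvPowerSeries.coeff (Finsupp.single 0 ij.1 + Finsupp.single 1 ij.2) F *
        MvPowerSeries.coeff d (a ^ ij.1 * b ^ ij.2)

/-- `subst1 f G` is the substitution `f(G)` of the power series `G`
(with zero constant term) into the one-variable power series `f`. -/
noncomputable def subst1 {σ : Type*} (f : PowerSeries R) (G : MvPowerSeries σ R) :
    MvPowerSeries σ R :=
  fun d =>
    ∑ n ∈ Finset.range ((d.sum fun _ k => k) + 1),
      PowerSeries.coeff n f * MvPowerSeries.coeff d (G ^ n)

/-- Composition `f(g)` of one-variable power series (`g` with zero constant term). -/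
noncomputable def pcomp (f g : PowerSeries R) : PowerSeries R := subst1 f g

/-- A formal group law over `R`: a two-variable power series `F(X,Y)` with
`F(X,0) = X`, `F(0,Y) = Y`, `F(X,Y) = F(Y,X)` and `F(F(X,Y),Z) = F(X,F(Y,Z))`. -/
structure IsFGL (F : MvPowerSeries (Fin 2) R) : Prop where
  unit_left : subst2 F (MvPowerSeries.X 0) 0 = MvPowerSeries.X 0
  unit_right : subst2 F 0 (MvPowerSeries.X 1) = MvPowerSeries.X 1
  comm : subst2 F (MvPowerSeries.X 1) (MvPowerSeries.X 0) = F
  assoc : subst2 F (subst2 F (MvPowerSeries.X 0) (MvPowerSeries.X 1))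
        (MvPowerSeries.X 2 : MvPowerSeries (Fin 3) R)
      = subst2 F (MvPowerSeries.X 0) (subst2 F (MvPowerSeries.X 1) (MvPowerSeries.X 2))

/-- A homomorphism `f : F → G` of formal group laws: a one-variable power series with
zero constant term such that `f(F(X,Y)) = G(f(X), f(Y))`. -/
structure IsHom (F G : MvPowerSeries (Fin 2) R) (f : PowerSeries R) : Prop where
  const : PowerSeries.constantCoeff f = 0
  hom : subst1 f F =
    subst2 G (subst1 f (MvPowerSeries.X 0)) (subst1 f (MvPowerSeries.X 1))

/-- The coefficientwise Frobenius twist `F^{(p)}`. -/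
noncomputable def frob (p : ℕ) (F : MvPowerSeries (Fin 2) R) : MvPowerSeries (Fin 2) R :=
  fun d => (MvPowerSeries.coeff d F) ^ p

/-- The one-variable power series `F_Y(X,0)`, whose coefficient of `X^n` is the
coefficient of `X^n Y` in `F`. -/
noncomputable def FY0 (F : MvPowerSeries (Fin 2) R) : PowerSeries R :=
  PowerSeries.mk fun n =>
    MvPowerSeries.coeff (Finsupp.single 0 n + Finsupp.single 1 1) F

/-- The formal partial derivative `F_X(X,Y)` with respect to the first variable. -/
noncomputable def FX (F : MvPowerSeries (Fin 2) R) : MvPowerSeries (Fin 2) R :=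
  fun d => ((d 0 + 1 : ℕ) : R) * MvPowerSeries.coeff (d + Finsupp.single 0 1) F

/-- The `n`-series `[n]_F` of a formal group law, defined by `[0]_F = 0` and
`[n+1]_F(X) = F([n]_F(X), X)`. -/
noncomputable def nSeries (F : MvPowerSeries (Fin 2) R) : ℕ → PowerSeries R
  | 0 => 0
  | n + 1 => subst2 F (nSeries F n) PowerSeries.X

/-! Differentiate `f(F(X,Y)) = G(f(X), f(Y))` with respect to `Y` at `Y = 0`. Since `F(X,0) = X`,
the left side gives `f'(X) · F_Y(X,0)`. On the right, `f(X)` does not involve `Y` and `f(Y)` has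
no linear term, so the `Y`-derivative at `Y = 0` of every monomial `f(X)^i f(Y)^j` vanishes.
Hence `f'(X) · F_Y(X,0) = 0`, and `F_Y(X,0)` is a unit: its constant term is the coefficient `1`
of `Y` in `F`. -/

lemma degree_single_add_single_one (n : ℕ) :
    ((Finsupp.single (0 : Fin 2) n + Finsupp.single 1 1).sum fun _ k => k) = n + 1 := by
  rw [Finsupp.sum_add_index' (fun _ => rfl) (fun _ _ _ => rfl), Finsupp.sum_single_index rfl,
    Finsupp.sum_single_index rfl]

lemma coeff_subst1 {σ : Type*} (f : PowerSeries R) (P : MvPowerSeries σ R) (d : σ →₀ ℕ) :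
    MvPowerSeries.coeff d (subst1 f P) =
      ∑ k ∈ Finset.range ((d.sum fun _ k => k) + 1),
        PowerSeries.coeff k f * MvPowerSeries.coeff d (P ^ k) := rfl

lemma coeff_subst2 {σ : Type*} (F : MvPowerSeries (Fin 2) R) (a b : MvPowerSeries σ R)
    (d : σ →₀ ℕ) :
    MvPowerSeries.coeff d (subst2 F a b) =
      ∑ ij ∈ Finset.range ((d.sum fun _ k => k) + 1) ×ˢ Finset.range ((d.sum fun _ k => k) + 1),
        MvPowerSeries.coeff (Finsupp.single 0 ij.1 + Finsupp.single 1 ij.2) F *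
          MvPowerSeries.coeff d (a ^ ij.1 * b ^ ij.2) := rfl

/-- `P(X,0)`: `killCompl` along `Unit ↪ Fin 2`, `() ↦ 0`, sends the variable `Y = X 1` to `0`. -/
noncomputable def evalY0 : MvPowerSeries (Fin 2) R →ₐ[R] PowerSeries R :=
  MvPowerSeries.killCompl ⟨fun _ => 0, fun _ _ _ => rfl⟩

lemma coeff_evalY0 (P : MvPowerSeries (Fin 2) R) (m : ℕ) :
    PowerSeries.coeff m (evalY0 P) = MvPowerSeries.coeff (Finsupp.single 0 m) P := by
  rw [PowerSeries.coeff_def (Finsupp.single_eq_same (a := ()) (b := m)), evalY0,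
    MvPowerSeries.coeff_killCompl, Finsupp.embDomain_single]
  rfl

lemma FY0_eq_evalY0_pderiv (P : MvPowerSeries (Fin 2) R) :
    FY0 P = evalY0 (MvPowerSeries.pderiv R 1 P) := by
  ext m
  rw [coeff_evalY0, MvPowerSeries.coeff_pderiv, FY0, PowerSeries.coeff_mk]
  simp

lemma FY0_mul (P Q : MvPowerSeries (Fin 2) R) :
    FY0 (P * Q) = evalY0 P * FY0 Q + evalY0 Q * FY0 P := by
  simp only [FY0_eq_evalY0_pderiv, Derivation.leibniz, smul_eq_mul, map_add, map_mul]

lemma FY0_pow (P : MvPowerSeries (Fin 2) R) (k : ℕ) :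
    FY0 (P ^ k) = k * evalY0 P ^ (k - 1) * FY0 P := by
  simp only [FY0_eq_evalY0_pderiv, MvPowerSeries.pderiv_pow, map_mul, map_pow, map_natCast]

lemma coeff_FY0 (P : MvPowerSeries (Fin 2) R) (n : ℕ) :
    PowerSeries.coeff n (FY0 P) =
      MvPowerSeries.coeff (Finsupp.single 0 n + Finsupp.single 1 1) P :=
  PowerSeries.coeff_mk _ _

lemma coeff_FY0_subst1 (f : PowerSeries R) (P : MvPowerSeries (Fin 2) R) (n : ℕ) :
    PowerSeries.coeff n (FY0 (subst1 f P)) =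
      ∑ k ∈ Finset.range (n + 2), PowerSeries.coeff k f * PowerSeries.coeff n (FY0 (P ^ k)) := by
  simp only [coeff_FY0]
  rw [coeff_subst1, degree_single_add_single_one]

lemma FY0_subst1_of_evalY0_eq_X (f : PowerSeries R) {P : MvPowerSeries (Fin 2) R}
    (hP : evalY0 P = PowerSeries.X) :
    FY0 (subst1 f P) = PowerSeries.derivative R f * FY0 P := by
  ext n
  rw [coeff_FY0_subst1, Finset.sum_range_succ', PowerSeries.coeff_mul,
    Finset.Nat.sum_antidiagonal_eq_sum_range_succ_mk]
  simp only [FY0_pow, hP, PowerSeries.coeff_derivative]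
  rw [Nat.cast_zero, zero_mul, zero_mul, map_zero, mul_zero, add_zero]
  refine Finset.sum_congr rfl fun i hi => ?_
  rw [Nat.add_sub_cancel, mul_assoc, ← map_natCast (PowerSeries.C (R := R)),
    PowerSeries.coeff_C_mul, PowerSeries.coeff_X_pow_mul',
    if_pos (Nat.lt_succ_iff.mp (Finset.mem_range.mp hi))]
  push_cast
  ring

lemma FY0_subst2_eq_zero (G a b : MvPowerSeries (Fin 2) R) (ha : FY0 a = 0) (hb : FY0 b = 0) :
    FY0 (subst2 G a b) = 0 := by
  have hab : ∀ i j : ℕ, FY0 (a ^ i * b ^ j) = 0 := by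
    intro i j
    rw [FY0_mul, FY0_pow, FY0_pow, ha, hb]
    simp only [mul_zero, add_zero]
  ext n
  rw [coeff_FY0, map_zero, coeff_subst2]
  refine Finset.sum_eq_zero fun ij _ => ?_
  rw [← coeff_FY0, hab, map_zero, mul_zero]

lemma coeff_subst1_X_eq_zero {σ : Type*} (f : PowerSeries R) (s : σ) (d : σ →₀ ℕ)
    (h : ∀ k, d = Finsupp.single s k → PowerSeries.coeff k f = 0) :
    MvPowerSeries.coeff d (subst1 f (MvPowerSeries.X s)) = 0 := by
  classical
  rw [coeff_subst1]
  refine Finset.sum_eq_zero fun k _ => ?_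
  rw [MvPowerSeries.coeff_X_pow]
  split_ifs with hd
  · rw [h k hd, zero_mul]
  · rw [mul_zero]

lemma FY0_subst1_X_zero (f : PowerSeries R) : FY0 (subst1 f (MvPowerSeries.X 0)) = 0 := by
  ext n
  rw [coeff_FY0, map_zero]
  exact coeff_subst1_X_eq_zero f 0 _ fun k hk => by simpa using congrArg (· 1) hk

lemma FY0_subst1_X_one {f : PowerSeries R} (hf1 : PowerSeries.coeff 1 f = 0) :
    FY0 (subst1 f (MvPowerSeries.X 1)) = 0 := by
  ext n
  rw [coeff_FY0, map_zero]
  refine coeff_subst1_X_eq_zero f 1 _ fun k hk => ?_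
  obtain rfl : k = 1 := by simpa using (congrArg (· 1) hk).symm
  exact hf1

lemma coeff_single_subst2_X_zero {σ : Type*} (F : MvPowerSeries (Fin 2) R) (s : σ) (m : ℕ) :
    MvPowerSeries.coeff (Finsupp.single s m) (subst2 F (MvPowerSeries.X s) 0) =
      MvPowerSeries.coeff (Finsupp.single 0 m) F := by
  classical
  rw [coeff_subst2, Finsupp.sum_single_index rfl, Finset.sum_eq_single (m, 0)]
  · simp [MvPowerSeries.coeff_X_pow]
  · rintro ⟨i, j⟩ _ hij
    dsimp only
    rcases Nat.eq_zero_or_pos j with rfl | hj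
    · have hi : i ≠ m := fun h => hij (by rw [h])
      rw [pow_zero, mul_one, MvPowerSeries.coeff_X_pow,
        if_neg fun h => hi (Finsupp.single_injective s h).symm, mul_zero]
    · rw [zero_pow hj.ne', mul_zero, map_zero, mul_zero]
  · simp

lemma coeff_single_subst2_zero_X {σ : Type*} (F : MvPowerSeries (Fin 2) R) (s : σ) (m : ℕ) :
    MvPowerSeries.coeff (Finsupp.single s m) (subst2 F 0 (MvPowerSeries.X s)) =
      MvPowerSeries.coeff (Finsupp.single 1 m) F := by
  classical
  rw [coeff_subst2, Finsupp.sum_single_index rfl, Finset.sum_eq_single (0, m)]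
  · simp [MvPowerSeries.coeff_X_pow]
  · rintro ⟨i, j⟩ _ hij
    dsimp only
    rcases Nat.eq_zero_or_pos i with rfl | hi
    · have hj : j ≠ m := fun h => hij (by rw [h])
      rw [pow_zero, one_mul, MvPowerSeries.coeff_X_pow,
        if_neg fun h => hj (Finsupp.single_injective s h).symm, mul_zero]
    · rw [zero_pow hi.ne', zero_mul, map_zero, mul_zero]
  · simp

lemma IsFGL.evalY0_eq_X {F : MvPowerSeries (Fin 2) R} (hF : IsFGL F) :
    evalY0 F = PowerSeries.X := by
  ext m
  have h := congrArg (MvPowerSeries.coeff (Finsupp.single 0 m)) hF.unit_left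
  rw [coeff_single_subst2_X_zero, MvPowerSeries.coeff_X] at h
  rw [coeff_evalY0, h, PowerSeries.coeff_X]
  simp only [(Finsupp.single_injective _).eq_iff]

lemma IsFGL.isUnit_FY0 {F : MvPowerSeries (Fin 2) R} (hF : IsFGL F) : IsUnit (FY0 F) := by
  have h := congrArg (MvPowerSeries.coeff (Finsupp.single 1 1)) hF.unit_right
  rw [coeff_single_subst2_zero_X, MvPowerSeries.coeff_X, if_pos rfl] at h
  rw [PowerSeries.isUnit_iff_constantCoeff, ← PowerSeries.coeff_zero_eq_constantCoeff_apply,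
    coeff_FY0, Finsupp.single_zero, zero_add, h]
  exact isUnit_one

lemma IsHom.derivative_mul_FY0_eq_zero {F G : MvPowerSeries (Fin 2) R} {f : PowerSeries R}
    (hF : IsFGL F) (hf : IsHom F G f) (hf1 : PowerSeries.coeff 1 f = 0) :
    PowerSeries.derivative R f * FY0 F = 0 := by
  rw [← FY0_subst1_of_evalY0_eq_X f hF.evalY0_eq_X, hf.hom]
  exact FY0_subst2_eq_zero G _ _ (FY0_subst1_X_zero f) (FY0_subst1_X_one hf1)

theorem statement2_general (R : Type*) [CommRing R]
    (F G : MvPowerSeries (Fin 2) R) (hF : IsFGL F)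
    (f : PowerSeries R) (hf : IsHom F G f) (hf1 : PowerSeries.coeff 1 f = 0) :
    PowerSeries.derivativeFun f = 0 ∧
      ∀ n : ℕ, 1 ≤ n → (n : R) * PowerSeries.coeff n f = 0 := by
  have hderiv : PowerSeries.derivative R f = 0 :=
    hF.isUnit_FY0.mul_left_eq_zero.mp (hf.derivative_mul_FY0_eq_zero hF hf1)
  refine ⟨hderiv, fun n hn => ?_⟩
  obtain ⟨m, rfl⟩ := Nat.exists_eq_add_of_le' hn
  have h := congrArg (PowerSeries.coeff m) hderiv
  rw [PowerSeries.coeff_derivative, map_zero] at h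
  push_cast
  linear_combination h

/-- If `f : F → G` is a homomorphism of formal group laws whose linear coefficient is `0`,
then the formal derivative of `f` is the zero power series; equivalently
`n · (coefficient of T^n in f) = 0` for all `n ≥ 1`. -/
theorem statement2 (R : Type*) [CommRing R]
    (F G : MvPowerSeries (Fin 2) R) (hF : IsFGL F) (hG : IsFGL G)
    (f : PowerSeries R) (hf : IsHom F G f) (hf1 : PowerSeries.coeff 1 f = 0) :
    PowerSeries.derivativeFun f = 0 ∧
      ∀ n : ℕ, 1 ≤ n → (n : R) * PowerSeries.coeff n f = 0 :=
  statement2_general R F G hF f hf hf1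

end FGL
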